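/- For all 0 ≤ k ≤ n and complex numbers r_1, r_2 with r_1 + r_2 = r, we have W_{m,r,q}(n,k) = ∑_{j=k}^{n} C(n,j) r_2^{n-j} W_{m,r_1,q}(j,k). -/

import Mathlib

open Finset

noncomputable def qint (q : ℂ) (n : ℕ) : ℂ := (q ^ n - 1) / (q - 1)

/-- (q,r)-Whitney numbers of the first kind, via the triangular recurrence
`w(n+1,k) = q^{-n} (w(n,k-1) - (m[n]_q + r) w(n,k))`, with `w(0,0)=1` and
`w(n,k)=0` for `k>n` (the `k<0` values are zero, absorbed in the `k=0` case). -/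
noncomputable def qw (q m r : ℂ) : ℕ → ℕ → ℂ
  | 0, 0 => 1
  | 0, _ + 1 => 0
  | n + 1, 0 => q ^ (-(n : ℤ)) * (0 - (m * qint q n + r) * qw q m r n 0)
  | n + 1, k + 1 => q ^ (-(n : ℤ)) * (qw q m r n k - (m * qint q n + r) * qw q m r n (k + 1))

/-- (q,r)-Whitney numbers of the second kind, via
`W(n+1,k) = q^{k-1} W(n,k-1) + (m[k]_q + r) W(n,k)`, with `W(0,0)=1`. -/
noncomputable def qW (q m r : ℂ) : ℕ → ℕ → ℂ
  | 0, 0 => 1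
  | 0, _ + 1 => 0
  | n + 1, 0 => (m * qint q 0 + r) * qW q m r n 0
  | n + 1, k + 1 => q ^ k * qW q m r n k + (m * qint q (k + 1) + r) * qW q m r n (k + 1)


/-! The recurrence reads `qW q m s (n + 1) = T_s (qW q m s n)` for the linear operator
`T_s = whitneyStep q m s` on sequences `ℕ → ℂ`, and `T_(s + t) = T_s + t • 1`. Since `t • 1` is
central, the binomial theorem expands `(T_r₁ + r₂ • 1) ^ n`; applied to the initial sequence `δ₀`
this gives the identity summed over all `j ≤ n`, and the terms with `j < k` vanish. -/

noncomputable def whitneyStep (q m s : ℂ) : Module.End ℂ (ℕ → ℂ) where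
  toFun v
    | 0 => (m * qint q 0 + s) * v 0
    | k + 1 => q ^ k * v k + (m * qint q (k + 1) + s) * v (k + 1)
  map_add' v w := by funext k; cases k <;> simp only [Pi.add_apply] <;> ring
  map_smul' c v := by
    funext k
    cases k <;> simp only [Pi.smul_apply, smul_eq_mul, RingHom.id_apply] <;> ring

lemma whitneyStep_add (q m s t : ℂ) :
    whitneyStep q m (s + t) = whitneyStep q m s + algebraMap ℂ _ t := by
  ext v k
  cases k <;>
    simp only [whitneyStep, LinearMap.coe_mk, AddHom.coe_mk, LinearMap.add_apply,
      Module.algebraMap_end_apply, Pi.add_apply, Pi.smul_apply, smul_eq_mul] <;> ring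

lemma qW_succ (q m s : ℂ) (n : ℕ) : qW q m s (n + 1) = whitneyStep q m s (qW q m s n) := by
  funext k
  cases k <;> rfl

lemma qW_eq_pow_apply (q m s : ℂ) (n : ℕ) :
    qW q m s n = (whitneyStep q m s ^ n) (Pi.single 0 1) := by
  induction n with
  | zero => funext k; cases k <;> rfl
  | succ n ih => rw [qW_succ, ih, pow_succ', Module.End.mul_apply]

lemma qW_eq_zero_of_lt (q m s : ℂ) {n k : ℕ} (h : n < k) : qW q m s n k = 0 := by
  induction n generalizing k with
  | zero => obtain ⟨k, rfl⟩ := Nat.exists_eq_succ_of_ne_zero h.ne'; rfl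
  | succ n ih =>
    obtain ⟨k, rfl⟩ := Nat.exists_eq_succ_of_ne_zero (Nat.zero_lt_of_lt h).ne'
    simp [qW, ih (Nat.lt_of_succ_lt_succ h), ih (Nat.lt_of_succ_lt h)]

lemma qW_add_eq_sum_range (q m s t : ℂ) (n k : ℕ) :
    qW q m (s + t) n k =
      ∑ j ∈ range (n + 1), (n.choose j : ℂ) * t ^ (n - j) * qW q m s j k := by
  rw [qW_eq_pow_apply, whitneyStep_add,
    (Algebra.commute_algebraMap_right t (whitneyStep q m s)).add_pow]
  simp only [LinearMap.sum_apply, Finset.sum_apply, Module.End.mul_apply]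
  refine sum_congr rfl fun j _ => ?_
  rw [← map_pow, Module.algebraMap_end_apply, Module.End.natCast_apply, map_smul, map_nsmul,
    ← qW_eq_pow_apply]
  simp only [Pi.smul_apply, smul_eq_mul, nsmul_eq_mul, Pi.mul_apply, Pi.natCast_apply]
  ring

theorem stmt12_general (q m r r₁ r₂ : ℂ) (hr : r = r₁ + r₂)
    (n k : ℕ) :
    qW q m r n k =
      ∑ j ∈ Finset.Icc k n, (n.choose j : ℂ) * r₂ ^ (n - j) * qW q m r₁ j k := by
  subst hr
  rw [qW_add_eq_sum_range]
  refine (sum_subset (fun j hj => ?_) fun j hjn hj => ?_).symm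
  · simp only [mem_Icc, mem_range] at hj ⊢
    omega
  · have hjk : j < k := by
      simp only [mem_Icc, mem_range] at hjn hj
      omega
    rw [qW_eq_zero_of_lt q m r₁ hjk, mul_zero]

theorem stmt12 (q m r r₁ r₂ : ℂ) (hq0 : q ≠ 0) (hq1 : q ≠ 1) (hr : r = r₁ + r₂)
    (n k : ℕ) (hkn : k ≤ n) :
    qW q m r n k =
      ∑ j ∈ Finset.Icc k n, (n.choose j : ℂ) * r₂ ^ (n - j) * qW q m r₁ j k :=
  stmt12_general q m r r₁ r₂ hr n k
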